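/- Let G be a k-uniform supertree, let e be a non-pendent edge of G, let u ∈ e, and let G' be the hypergraph obtained from G by an edge-releasing operation on e at u. Then G' is also a k-uniform supertree. -/

import Mathlib

/-- A (finite) hypergraph on vertex type `V`: a finite set of edges, each a finite
set of vertices.  For the results below the vertex set is the whole type `V`. -/
structure UHypergraph (V : Type*) where
  edges : Finset (Finset V)

namespace UHypergraph

variable {V W : Type*}

/-- `G` is `k`-uniform: every edge has exactly `k` vertices. -/
def Uniform (G : UHypergraph V) (k : ℕ) : Prop := ∀ e ∈ G.edges, e.card = k

/-- The degree of a vertex: the number of edges containing it. -/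
def degree [DecidableEq V] (G : UHypergraph V) (v : V) : ℕ :=
  (G.edges.filter fun e => v ∈ e).card

/-- A walk of length `l` from `u` to `v`: vertices `vs 0 = u, …, vs l = v` and edges
`es 0, …, es (l-1)` with consecutive vertices lying in the corresponding edge. -/
def Walk (G : UHypergraph V) (u v : V) (l : ℕ) : Prop :=
  ∃ (vs : Fin (l + 1) → V) (es : Fin l → Finset V),
    vs 0 = u ∧ vs (Fin.last l) = v ∧
    ∀ i : Fin l, es i ∈ G.edges ∧ vs i.castSucc ∈ es i ∧ vs i.succ ∈ es i

/-- `G` is connected: any two vertices are joined by a walk (equivalently, a path). -/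
def Connected (G : UHypergraph V) : Prop := ∀ u v : V, ∃ l, G.Walk u v l

/-- The distance between two vertices: the minimum length of a walk joining them. -/
noncomputable def hdist (G : UHypergraph V) (u v : V) : ℕ := sInf {l | G.Walk u v l}

/-- `G` has a cycle: distinct vertices `v_1, …, v_l` and distinct edges `e_1, …, e_l`
(`l ≥ 2`) with `{v_i, v_{i+1}} ⊆ e_i` (indices mod `l`). -/
def HasCycle (G : UHypergraph V) : Prop :=
  ∃ (l : ℕ) (hl : 2 ≤ l) (vs : Fin l → V) (es : Fin l → Finset V),
    Function.Injective vs ∧ Function.Injective es ∧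
    (∀ i, es i ∈ G.edges) ∧
    ∀ i : Fin l, vs i ∈ es i ∧ vs ⟨((i : ℕ) + 1) % l, Nat.mod_lt _ (by omega)⟩ ∈ es i

/-- A `k`-uniform supertree: a `k`-uniform hypergraph that is connected and acyclic. -/
def IsSupertree (G : UHypergraph V) (k : ℕ) : Prop :=
  G.Uniform k ∧ G.Connected ∧ ¬ G.HasCycle

/-- `e` is a pendent edge of `G`: one of its vertices has degree at least `2` and all
its other vertices have degree `1`. -/
def IsPendentEdge [DecidableEq V] (G : UHypergraph V) (e : Finset V) : Prop :=
  e ∈ G.edges ∧ ∃ v ∈ e, 2 ≤ G.degree v ∧ ∀ w ∈ e, w ≠ v → G.degree w = 1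

/-- `S` is an independent set: no two of its vertices lie in a common edge. -/
def IsIndep (G : UHypergraph V) (S : Finset V) : Prop :=
  ∀ u ∈ S, ∀ v ∈ S, u ≠ v → ∀ e ∈ G.edges, ¬ (u ∈ e ∧ v ∈ e)

/-- The independence number: the maximum size of an independent set. -/
noncomputable def indepNum (G : UHypergraph V) : ℕ :=
  sSup {n | ∃ S : Finset V, G.IsIndep S ∧ S.card = n}

/-- `M` is a matching: a set of pairwise disjoint edges of `G`. -/
def IsMatching [DecidableEq V] (G : UHypergraph V) (M : Finset (Finset V)) : Prop :=
  M ⊆ G.edges ∧ ∀ e ∈ M, ∀ f ∈ M, e ≠ f → e ∩ f = ∅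

/-- The matching number: the maximum size of a matching. -/
noncomputable def matchNum [DecidableEq V] (G : UHypergraph V) : ℕ :=
  sSup {n | ∃ M : Finset (Finset V), G.IsMatching M ∧ M.card = n}

/-- The `α`-spectral radius of a (connected) `k`-uniform hypergraph:
`ρ_α(G) = max { Σ_{e∈E} ( α Σ_{v∈e} x_v^k + (1-α) k Π_{v∈e} x_v ) :
x ≥ 0, Σ_v x_v^k = 1 }`. -/
noncomputable def aspec [Fintype V] (G : UHypergraph V) (k : ℕ) (α : ℝ) : ℝ :=
  sSup {r : ℝ | ∃ x : V → ℝ, (∀ v, 0 ≤ x v) ∧ (∑ v, x v ^ k) = 1 ∧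
    r = ∑ e ∈ G.edges, (α * ∑ v ∈ e, x v ^ k + (1 - α) * (k : ℝ) * ∏ v ∈ e, x v)}

/-- `x` is the `α`-Perron vector of `G`: the positive unit maximizer in the
variational characterization of `ρ_α(G)`. -/
def IsPerron [Fintype V] (G : UHypergraph V) (k : ℕ) (α : ℝ) (x : V → ℝ) : Prop :=
  (∀ v, 0 < x v) ∧ (∑ v, x v ^ k) = 1 ∧
  (∑ e ∈ G.edges, (α * ∑ v ∈ e, x v ^ k + (1 - α) * (k : ℝ) * ∏ v ∈ e, x v)) =
    G.aspec k α

/-- The multiset of vertex degrees of `G` (the degree sequence up to ordering). -/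
noncomputable def degreeMultiset [Fintype V] [DecidableEq V] (G : UHypergraph V) :
    Multiset ℕ :=
  (Finset.univ : Finset V).val.map G.degree

/-- Isomorphism of hypergraphs: a bijection of the vertex sets carrying edges to
edges. -/
def Iso [DecidableEq W] (G : UHypergraph V) (H : UHypergraph W) : Prop :=
  ∃ φ : V ≃ W, ∀ e : Finset V, e ∈ G.edges ↔ e.image φ ∈ H.edges

end UHypergraph

/-- Edge-releasing of the non-pendent edge `e` of a supertree at `u ∈ e`:
every edge `f` adjacent to `e` but not containing `u` (in a supertree it meets
`e` in exactly one vertex `v_f`) is replaced by `(f ∖ {v_f}) ∪ {u}`. -/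
def UHypergraph.edgeRelease {V : Type} [DecidableEq V] (G : UHypergraph V)
    (e : Finset V) (u : V) : UHypergraph V :=
  ⟨G.edges.image fun f =>
    if f ≠ e ∧ (f ∩ e).Nonempty ∧ u ∉ f then insert u (f \ e) else f⟩

/-! The incidence graph of a hypergraph, on vertices and edges with `v ∼ f` for `v ∈ f`, is
acyclic exactly when the hypergraph has no cycle. So a connected hypergraph with nonempty edges
is acyclic iff its incidence graph is a tree, i.e. iff `∑_f |f| + 1 = |V| + |E|`. Edge-releasing keeps `G` connected and `k`-uniform (in a supertree a
moved edge meets `e` in a single vertex, which is traded for `u`), and it does not identify two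
edges, since two edges meeting `e` and each other outside `e` would close a cycle of length two
or three. Hence both sides of the count are unchanged. -/

namespace UHypergraph

section Adjacency

variable {V : Type*} {H : UHypergraph V}

def Adj (H : UHypergraph V) (a b : V) : Prop := ∃ f ∈ H.edges, a ∈ f ∧ b ∈ f

lemma Adj.symm {a b : V} : H.Adj a b → H.Adj b a
  | ⟨f, hf, ha, hb⟩ => ⟨f, hf, hb, ha⟩

lemma walk_zero_iff {a b : V} : H.Walk a b 0 ↔ a = b := by
  refine ⟨fun ⟨vs, _, h0, hl, _⟩ => h0.symm.trans hl, fun hab => ?_⟩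
  exact ⟨fun _ => a, Fin.elim0, rfl, hab, fun i => i.elim0⟩

lemma walk_succ_iff {a c : V} {l : ℕ} :
    H.Walk a c (l + 1) ↔ ∃ b, H.Walk a b l ∧ H.Adj b c := by
  constructor
  · rintro ⟨vs, es, h0, hl, hstep⟩
    refine ⟨vs (Fin.last l).castSucc, ⟨vs ∘ Fin.castSucc, es ∘ Fin.castSucc, h0, rfl,
      fun i => ?_⟩, es (Fin.last l), (hstep _).1, (hstep _).2.1, hl ▸ (hstep _).2.2⟩
    simpa only [Function.comp, Fin.succ_castSucc] using hstep i.castSucc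
  · rintro ⟨b, ⟨vs, es, h0, hl, hstep⟩, f, hf, hb, hc⟩
    refine ⟨Fin.snoc vs c, Fin.snoc es f, by simpa using h0, by simp, Fin.lastCases ?_ ?_⟩
    · simpa [hl] using ⟨hf, hb, hc⟩
    · intro i
      rw [Fin.succ_castSucc]
      simpa only [Fin.snoc_castSucc] using hstep i

lemma reflTransGen_adj_iff {a b : V} :
    Relation.ReflTransGen H.Adj a b ↔ ∃ l, H.Walk a b l := by
  constructor
  · intro h
    induction h with
    | refl => exact ⟨0, walk_zero_iff.2 rfl⟩
    | tail _ hbc ih =>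
      obtain ⟨l, hw⟩ := ih
      exact ⟨l + 1, walk_succ_iff.2 ⟨_, hw, hbc⟩⟩
  · rintro ⟨l, hw⟩
    induction l generalizing b with
    | zero => exact walk_zero_iff.1 hw ▸ .refl
    | succ l ih =>
      obtain ⟨c, hw, hcb⟩ := walk_succ_iff.1 hw
      exact (ih hw).tail hcb

lemma connected_iff_reflTransGen :
    H.Connected ↔ ∀ a b, Relation.ReflTransGen H.Adj a b := by
  simp only [Connected, reflTransGen_adj_iff]

end Adjacency

section IncidenceGraph

open SimpleGraph

variable {V : Type*} {H : UHypergraph V}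

def incidenceGraph (H : UHypergraph V) : SimpleGraph (V ⊕ H.edges) where
  Adj
    | .inl v, .inr f | .inr f, .inl v => v ∈ f.1
    | _, _ => False
  symm := ⟨by rintro (v | f) (w | g) h <;> exact h⟩
  loopless := ⟨by rintro (v | f) h <;> exact h⟩

@[simp] lemma incidenceGraph_adj_inl_inr {v : V} {f : H.edges} :
    H.incidenceGraph.Adj (.inl v) (.inr f) ↔ v ∈ f.1 := .rfl

@[simp] lemma incidenceGraph_adj_inr_inl {v : V} {f : H.edges} :
    H.incidenceGraph.Adj (.inr f) (.inl v) ↔ v ∈ f.1 := .rfl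

@[simp] lemma not_incidenceGraph_adj_inl_inl {v w : V} :
    ¬ H.incidenceGraph.Adj (.inl v) (.inl w) := id

@[simp] lemma not_incidenceGraph_adj_inr_inr {f g : H.edges} :
    ¬ H.incidenceGraph.Adj (.inr f) (.inr g) := id

def incidenceColoring (H : UHypergraph V) : H.incidenceGraph.Coloring Bool :=
  .mk Sum.isLeft <| by rintro (v | f) (w | g) h <;> simp_all

@[simp] lemma incidenceColoring_apply (x : V ⊕ H.edges) :
    H.incidenceColoring x = x.isLeft := rfl

lemma incidence_bijective :
    Function.Bijective fun p : Σ f : H.edges, f.1 =>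
      (⟨s(.inl p.2.1, .inr p.1), p.2.2⟩ : H.incidenceGraph.edgeSet) := by
  constructor
  · rintro ⟨f, v, hv⟩ ⟨g, w, hw⟩ h
    obtain ⟨hvw, hfg⟩ | ⟨h, -⟩ := Sym2.eq_iff.1 (congrArg Subtype.val h)
    · cases Sum.inl_injective hvw
      cases Sum.inr_injective hfg
      rfl
    · exact Sum.inl_ne_inr h |>.elim
  · rintro ⟨x, hx⟩
    induction x using Sym2.ind with
    | _ a b =>
      rcases a with v | f <;> rcases b with w | g
      · exact (not_incidenceGraph_adj_inl_inl ((mem_edgeSet _).1 hx)).elim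
      · exact ⟨⟨g, v, hx⟩, rfl⟩
      · exact ⟨⟨f, w, hx⟩, Subtype.ext Sym2.eq_swap⟩
      · exact (not_incidenceGraph_adj_inr_inr ((mem_edgeSet _).1 hx)).elim

lemma card_edgeSet_incidenceGraph :
    Nat.card H.incidenceGraph.edgeSet = ∑ f ∈ H.edges, f.card := by
  rw [← Nat.card_congr (Equiv.ofBijective _ incidence_bijective), Nat.card_sigma]
  simpa using Finset.sum_attach H.edges Finset.card

lemma Adj.reachable_incidenceGraph {a b : V} (h : H.Adj a b) :
    H.incidenceGraph.Reachable (.inl a) (.inl b) := by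
  obtain ⟨f, hf, ha, hb⟩ := h
  exact (incidenceGraph_adj_inl_inr.2 ha).reachable.trans
    (incidenceGraph_adj_inr_inl (f := ⟨f, hf⟩).2 hb).reachable

lemma connected_incidenceGraph [Nonempty V] (hH : H.Connected)
    (hne : ∀ f ∈ H.edges, f.Nonempty) : H.incidenceGraph.Connected := by
  have reach (a b : V) : H.incidenceGraph.Reachable (.inl a) (.inl b) := by
    induction connected_iff_reflTransGen.1 hH a b with
    | refl => rfl
    | tail _ h ih => exact ih.trans h.reachable_incidenceGraph
  have reach_inr (f : H.edges) : ∃ a, H.incidenceGraph.Reachable (.inr f) (.inl a) :=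
    have ⟨a, ha⟩ := hne f.1 f.2
    ⟨a, (incidenceGraph_adj_inr_inl.2 ha).reachable⟩
  refine .mk fun x y => ?_
  obtain ⟨a, hxa⟩ : ∃ a, H.incidenceGraph.Reachable x (.inl a) := by
    rcases x with a | f
    exacts [⟨a, .rfl⟩, reach_inr f]
  obtain ⟨b, hyb⟩ : ∃ b, H.incidenceGraph.Reachable y (.inl b) := by
    rcases y with b | g
    exacts [⟨b, .rfl⟩, reach_inr g]
  exact hxa.trans ((reach a b).trans hyb.symm)

lemma HasCycle.not_isAcyclic_incidenceGraph (h : H.HasCycle) :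
    ¬ H.incidenceGraph.IsAcyclic := by
  obtain ⟨l, hl, vs, es, hvs, hes, hmem_edges, hmem⟩ := h
  let idx (i : ℕ) : Fin l := ⟨i % l, Nat.mod_lt _ (by omega)⟩
  let v (i : ℕ) : V ⊕ H.edges := .inl (vs (idx i))
  let f (i : ℕ) : V ⊕ H.edges := .inr ⟨es (idx i), hmem_edges _⟩
  have hidx (i : ℕ) :
      (⟨((idx i : ℕ) + 1) % l, Nat.mod_lt _ (by omega)⟩ : Fin l) = idx (i + 1) :=
    Fin.ext (Nat.mod_add_mod i l 1)
  -- The incidence `s(v 0, f 0)` is no bridge: the rest of the cycle still joins its ends.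
  set G₀ := H.incidenceGraph.deleteEdges {s(v 0, f 0)}
  have hf (i : ℕ) (hi : i % l ≠ 0) : f i ≠ f 0 := by
    simpa [f, idx] using fun h => hi (congrArg Fin.val (hes h))
  have step (i : ℕ) (hi : i % l ≠ 0) : G₀.Reachable (v i) (v (i + 1)) := by
    have h₁ : G₀.Adj (v i) (f i) :=
      (deleteEdges_adj ..).2 ⟨(hmem _).1, by simp [v, f, hf i hi]⟩
    have h₂ : G₀.Adj (f i) (v (i + 1)) :=
      (deleteEdges_adj ..).2
        ⟨incidenceGraph_adj_inr_inl.2 (by simpa [hidx] using (hmem (idx i)).2), by simp [hf i hi]⟩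
    exact h₁.reachable.trans h₂.reachable
  have around (j : ℕ) (hj : j + 1 ≤ l) : G₀.Reachable (v 1) (v (j + 1)) := by
    induction j with
    | zero => rfl
    | succ j ih => exact (ih (by omega)).trans (step _ (by rw [Nat.mod_eq_of_lt] <;> omega))
  have back : G₀.Adj (f 0) (v 1) := by
    refine (deleteEdges_adj ..).2
      ⟨incidenceGraph_adj_inr_inl.2 (by simpa [hidx] using (hmem (idx 0)).2), ?_⟩
    have : vs (idx 1) ≠ vs (idx 0) := fun h => by
      simpa [idx, Nat.mod_eq_of_lt hl] using congrArg Fin.val (hvs h)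
    simp [v, f, this]
  have hvl : v (l - 1 + 1) = v 0 := by simp [v, idx, Nat.sub_add_cancel (by omega : 1 ≤ l)]
  intro hac
  have hadj : H.incidenceGraph.Adj (v 0) (f 0) := (hmem _).1
  refine isBridge_iff.1 (isAcyclic_iff_forall_adj_isBridge.1 hac hadj) ?_
  exact (hvl ▸ around (l - 1) (by omega)).symm.trans back.reachable.symm

lemma hasCycle_of_isCycle_incidenceGraph {x : V ⊕ H.edges} (hx : x.isLeft)
    {c : H.incidenceGraph.Walk x x} (hc : c.IsCycle) : H.HasCycle := by
  -- Hypergraph vertices sit at the even positions of `c`, hyperedges at the odd ones.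
  have side (i : ℕ) (hi : i ≤ c.length) : (c.getVert i).isLeft ↔ Even i := by
    have := H.incidenceColoring.even_length_iff_congr (c.take i)
    simp_all [Walk.take_length]
  obtain ⟨l, hl⟩ : Even c.length := (side _ le_rfl).1 (by rwa [Walk.getVert_length])
  have hl2 : 2 ≤ l := by have := hc.three_le_length; omega
  have vert (i : ℕ) : ∃ a, c.getVert (2 * i) = .inl a := by
    refine Sum.isLeft_iff.1 ?_
    rcases le_or_gt (2 * i) c.length with h | h
    · exact (side _ h).2 (even_two_mul i)
    · rwa [c.getVert_of_length_le h.le]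
  have edge (i : Fin l) : ∃ f, c.getVert (2 * i + 1) = .inr f := by
    refine Sum.isRight_iff.1 ?_
    have := (side (2 * i + 1) (by omega)).not
    simp_all
  choose a ha using vert
  choose f hf using edge
  have wrap (i : Fin l) : c.getVert (2 * i + 2) = c.getVert (2 * ((i + 1) % l)) := by
    rcases Nat.lt_or_ge (i + 1) l with h | h
    · rw [Nat.mod_eq_of_lt h, Nat.mul_succ]
    · rw [show (i : ℕ) + 1 = l by omega, Nat.mod_self, Nat.mul_zero, Walk.getVert_zero,
        c.getVert_of_length_le (by omega)]
  refine ⟨l, hl2, fun i => a i, fun i => (f i).1, fun i j hij => ?_, fun i j hij => ?_,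
    fun i => (f i).2, fun i => ⟨?_, ?_⟩⟩
  · have := hc.getVert_injOn' (by simp; omega) (by simp; omega)
      (show c.getVert (2 * i) = c.getVert (2 * j) by rw [ha, ha]; exact congrArg _ hij)
    exact Fin.ext (by omega)
  · have := hc.getVert_injOn' (by simp; omega) (by simp; omega)
      (show c.getVert (2 * i + 1) = c.getVert (2 * j + 1) by rw [hf, hf, Subtype.ext hij])
    exact Fin.ext (by omega)
  · simpa [ha, hf] using c.adj_getVert_succ (i := 2 * i) (by omega)
  · have := c.adj_getVert_succ (i := 2 * i + 1) (by omega)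
    rw [hf, wrap, ha] at this
    simpa using this

lemma isAcyclic_incidenceGraph (h : ¬ H.HasCycle) : H.incidenceGraph.IsAcyclic := by
  classical
  rintro (v | f) c hc
  · exact h (hasCycle_of_isCycle_incidenceGraph rfl hc)
  · have hsnd := c.adj_snd hc.not_nil
    have hleft : c.snd.isLeft := by
      rcases hs : c.snd with w | g
      · rfl
      · exact (not_incidenceGraph_adj_inr_inr (hs ▸ hsnd)).elim
    exact h (hasCycle_of_isCycle_incidenceGraph hleft (hc.rotate (c.getVert_mem_support 1)))

theorem not_hasCycle_iff_card [Finite V] [Nonempty V] (hH : H.Connected)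
    (hne : ∀ f ∈ H.edges, f.Nonempty) :
    ¬ H.HasCycle ↔ ∑ f ∈ H.edges, f.card + 1 = Nat.card V + H.edges.card := by
  have hconn := connected_incidenceGraph hH hne
  rw [← card_edgeSet_incidenceGraph, ← Nat.card_eq_finsetCard, ← Nat.card_sum]
  constructor
  · exact fun h => (isTree_iff_connected_and_card.1 ⟨hconn, isAcyclic_incidenceGraph h⟩).2
  · exact fun h hc => hc.not_isAcyclic_incidenceGraph
      (isTree_iff_connected_and_card.2 ⟨hconn, h⟩).isAcyclic

end IncidenceGraph

section Uniform

open Finset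

variable {V : Type*} {H : UHypergraph V} {k : ℕ}

lemma Uniform.sum_card (hU : H.Uniform k) : ∑ f ∈ H.edges, f.card = H.edges.card * k := by
  rw [sum_congr rfl hU, sum_const, smul_eq_mul]

lemma Uniform.nonempty (hU : H.Uniform k) (hk : 0 < k) {f : Finset V}
    (hf : f ∈ H.edges) : f.Nonempty :=
  card_pos.1 (hU f hf ▸ hk)

lemma Uniform.sdiff_nonempty [DecidableEq V] (hU : H.Uniform k) {e f : Finset V}
    (he : e ∈ H.edges) (hf : f ∈ H.edges) (hfe : f ≠ e) : (f \ e).Nonempty :=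
  Finset.sdiff_nonempty.2 fun hsub => hfe (eq_of_subset_of_card_le hsub (by rw [hU f hf, hU e he]))

end Uniform

section Acyclic

open Finset

variable {V : Type*} [DecidableEq V] {H : UHypergraph V}

lemma hasCycle_of_two_mem_inter {f g : Finset V} (hf : f ∈ H.edges) (hg : g ∈ H.edges)
    (hfg : f ≠ g) {x y : V} (hx : x ∈ f ∩ g) (hy : y ∈ f ∩ g) (hxy : x ≠ y) : H.HasCycle := by
  rw [mem_inter] at hx hy
  refine ⟨2, le_rfl, ![x, y], ![f, g], ?_, ?_, ?_, ?_⟩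
  · intro i j hij
    fin_cases i <;> fin_cases j <;> simp_all [eq_comm]
  · intro i j hij
    fin_cases i <;> fin_cases j <;> simp_all [eq_comm]
  · intro i
    fin_cases i <;> simpa
  · intro i
    fin_cases i <;> simp_all

lemma hasCycle_of_triangle {e f g : Finset V} (he : e ∈ H.edges) (hf : f ∈ H.edges)
    (hg : g ∈ H.edges) (hef : e ≠ f) (hfg : f ≠ g) (hge : g ≠ e) {a b c : V}
    (ha : a ∈ e ∩ f) (hb : b ∈ f ∩ g) (hc : c ∈ g ∩ e) (hab : a ≠ b) (hbc : b ≠ c)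
    (hca : c ≠ a) : H.HasCycle := by
  rw [mem_inter] at ha hb hc
  refine ⟨3, by norm_num, ![a, b, c], ![f, g, e], ?_, ?_, ?_, ?_⟩
  · intro i j hij
    fin_cases i <;> fin_cases j <;> simp_all [eq_comm]
  · intro i j hij
    fin_cases i <;> fin_cases j <;> simp_all [eq_comm]
  · intro i
    fin_cases i <;> simpa
  · intro i
    fin_cases i <;> simp_all

lemma card_inter_le_one (hA : ¬ H.HasCycle) {f g : Finset V} (hf : f ∈ H.edges)
    (hg : g ∈ H.edges) (hfg : f ≠ g) : (f ∩ g).card ≤ 1 :=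
  card_le_one.2 fun _ hx _ hy =>
    by_contra fun hxy => hA (hasCycle_of_two_mem_inter hf hg hfg hx hy hxy)

lemma eq_of_mem_sdiff_of_mem_inter (hA : ¬ H.HasCycle) {e f₁ f₂ : Finset V}
    (he : e ∈ H.edges) (hf₁ : f₁ ∈ H.edges) (hf₂ : f₂ ∈ H.edges) (h₁ : f₁ ≠ e) (h₂ : f₂ ≠ e)
    {y z₁ z₂ : V} (hy₁ : y ∈ f₁ \ e) (hy₂ : y ∈ f₂) (hz₁ : z₁ ∈ f₁ ∩ e) (hz₂ : z₂ ∈ f₂ ∩ e) :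
    f₁ = f₂ := by
  by_contra h₁₂
  obtain ⟨hy₁, hye⟩ := mem_sdiff.1 hy₁
  obtain ⟨hz₁, hz₁e⟩ := mem_inter.1 hz₁
  obtain ⟨hz₂, hz₂e⟩ := mem_inter.1 hz₂
  have hy : y ∈ f₁ ∩ f₂ := mem_inter.2 ⟨hy₁, hy₂⟩
  have hyz₁ : y ≠ z₁ := fun h => hye (h ▸ hz₁e)
  have hyz₂ : y ≠ z₂ := fun h => hye (h ▸ hz₂e)
  rcases eq_or_ne z₁ z₂ with rfl | hz
  · exact hA (hasCycle_of_two_mem_inter hf₁ hf₂ h₁₂ hy (mem_inter.2 ⟨hz₁, hz₂⟩) hyz₁)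
  · exact hA (hasCycle_of_triangle he hf₁ hf₂ h₁.symm h₁₂ h₂ (mem_inter.2 ⟨hz₁e, hz₁⟩) hy
      (mem_inter.2 ⟨hz₂, hz₂e⟩) hyz₁.symm hyz₂ hz.symm)

end Acyclic

section Release

open Finset

variable {V : Type*} [DecidableEq V] (e : Finset V) (u : V)

def releaseEdge (f : Finset V) : Finset V :=
  if f ≠ e ∧ (f ∩ e).Nonempty ∧ u ∉ f then insert u (f \ e) else f

variable {e u}

@[simp] lemma releaseEdge_self : releaseEdge e u e = e := if_neg fun h => h.1 rfl

lemma releaseEdge_of_not_nonempty {f : Finset V} (h : ¬ (f ∩ e).Nonempty) :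
    releaseEdge e u f = f :=
  if_neg fun h' => h h'.2.1

lemma releaseEdge_sdiff (hu : u ∈ e) (f : Finset V) : releaseEdge e u f \ e = f \ e := by
  unfold releaseEdge
  split_ifs
  · rw [insert_sdiff_of_mem _ hu, Finset.sdiff_idem]
  · rfl

lemma inter_releaseEdge_nonempty_iff (hu : u ∈ e) {f : Finset V} :
    (releaseEdge e u f ∩ e).Nonempty ↔ (f ∩ e).Nonempty := by
  unfold releaseEdge
  split_ifs with h
  · exact iff_of_true ⟨u, mem_inter.2 ⟨mem_insert_self _ _, hu⟩⟩ h.2.1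
  · rfl

variable {H : UHypergraph V} {k : ℕ}

lemma card_releaseEdge (hA : ¬ H.HasCycle) (hU : H.Uniform k) (he : e ∈ H.edges)
    (hu : u ∈ e) {f : Finset V} (hf : f ∈ H.edges) : (releaseEdge e u f).card = k := by
  unfold releaseEdge
  split_ifs with h
  · obtain ⟨hfe, hne, -⟩ := h
    have h₁ : (f ∩ e).card = 1 := le_antisymm (card_inter_le_one hA hf he hfe) hne.card_pos
    have := card_sdiff_add_card_inter f e
    rw [card_insert_of_notMem fun h => (mem_sdiff.1 h).2 hu, ← hU f hf]
    omega
  · exact hU f hf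

/-- Released edges remember their part outside `e` and whether they meet `e`; by acyclicity
two distinct edges meeting `e` cannot share a vertex outside `e`. -/
lemma injOn_releaseEdge (hA : ¬ H.HasCycle) (hU : H.Uniform k) (he : e ∈ H.edges)
    (hu : u ∈ e) : Set.InjOn (releaseEdge e u) H.edges := by
  intro f₁ hf₁ f₂ hf₂ heq
  have hsdiff : f₁ \ e = f₂ \ e := by
    rw [← releaseEdge_sdiff hu, heq, releaseEdge_sdiff hu]
  have ne_of_sdiff_eq {f g : Finset V} (hf : f ∈ H.edges) (hfg : f \ e = g \ e) (hfe : f ≠ e) :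
      g ≠ e := by
    rintro rfl
    simpa [hfg] using hU.sdiff_nonempty he hf hfe
  rcases eq_or_ne f₁ e with rfl | h₁
  · by_contra h₂
    exact ne_of_sdiff_eq hf₂ hsdiff.symm (Ne.symm h₂) rfl
  have h₂ := ne_of_sdiff_eq hf₁ hsdiff h₁
  have hmeet : (f₁ ∩ e).Nonempty ↔ (f₂ ∩ e).Nonempty := by
    rw [← inter_releaseEdge_nonempty_iff hu, heq, inter_releaseEdge_nonempty_iff hu]
  by_cases hm : (f₁ ∩ e).Nonempty
  · obtain ⟨y, hy⟩ := hU.sdiff_nonempty he hf₁ h₁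
    obtain ⟨z₁, hz₁⟩ := hm
    obtain ⟨z₂, hz₂⟩ := hmeet.1 ⟨z₁, hz₁⟩
    exact eq_of_mem_sdiff_of_mem_inter hA he hf₁ hf₂ h₁ h₂ hy
      (mem_sdiff.1 (hsdiff ▸ hy)).1 hz₁ hz₂
  · rwa [releaseEdge_of_not_nonempty hm, releaseEdge_of_not_nonempty (hmeet.not.1 hm)] at heq

end Release

section EdgeRelease

open Finset

variable {V : Type} [DecidableEq V] {G : UHypergraph V} {e : Finset V} {u : V} {k : ℕ}

lemma edges_edgeRelease : (G.edgeRelease e u).edges = G.edges.image (releaseEdge e u) := rfl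

lemma releaseEdge_mem_edgeRelease {f : Finset V} (hf : f ∈ G.edges) :
    releaseEdge e u f ∈ (G.edgeRelease e u).edges :=
  mem_image_of_mem _ hf

lemma edgeRelease_uniform (hA : ¬ G.HasCycle) (hU : G.Uniform k) (he : e ∈ G.edges)
    (hu : u ∈ e) : (G.edgeRelease e u).Uniform k := by
  rw [Uniform, edges_edgeRelease, forall_mem_image]
  exact fun f hf => card_releaseEdge hA hU he hu hf

lemma card_edges_edgeRelease (hA : ¬ G.HasCycle) (hU : G.Uniform k) (he : e ∈ G.edges)
    (hu : u ∈ e) : (G.edgeRelease e u).edges.card = G.edges.card :=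
  card_image_of_injOn (injOn_releaseEdge hA hU he hu)

/-- Each vertex of a released edge `f` is joined to `u`, through `e` if it lies in `e` and
through the released edge otherwise. -/
lemma edgeRelease_connected (hG : G.Connected) (he : e ∈ G.edges) (hu : u ∈ e) :
    (G.edgeRelease e u).Connected := by
  rw [connected_iff_reflTransGen] at hG ⊢
  refine fun a b => Relation.reflTransGen_closed (fun a b (hab : G.Adj a b) => ?_) a b (hG a b)
  obtain ⟨f, hf, ha, hb⟩ := hab
  have he' : e ∈ (G.edgeRelease e u).edges := by
    simpa using releaseEdge_mem_edgeRelease (e := e) (u := u) he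
  have hf' := releaseEdge_mem_edgeRelease (e := e) (u := u) hf
  by_cases h : f ≠ e ∧ (f ∩ e).Nonempty ∧ u ∉ f
  · rw [releaseEdge, if_pos h] at hf'
    have toU (w : V) (hw : w ∈ f) : (G.edgeRelease e u).Adj w u := by
      by_cases hwe : w ∈ e
      · exact ⟨e, he', hwe, hu⟩
      · exact ⟨_, hf', mem_insert_of_mem (mem_sdiff.2 ⟨hw, hwe⟩), mem_insert_self _ _⟩
    exact .tail (.single (toU a ha)) (toU b hb).symm
  · rw [releaseEdge, if_neg h] at hf'
    exact .single ⟨f, hf', ha, hb⟩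

end EdgeRelease

end UHypergraph

theorem edgeRelease_isSupertree_general (k : ℕ)
    {V : Type} [Fintype V] [DecidableEq V] (G G' : UHypergraph V)
    (hG : G.IsSupertree k)
    (e : Finset V) (he : e ∈ G.edges)
    (u : V) (hu : u ∈ e)
    (hG' : G' = G.edgeRelease e u) :
    G'.IsSupertree k := by
  obtain ⟨hU, hC, hA⟩ := hG
  subst hG'
  have : Nonempty V := ⟨u⟩
  have hk : 0 < k := hU e he ▸ Finset.card_pos.2 ⟨u, hu⟩
  have hU' := UHypergraph.edgeRelease_uniform hA hU he hu
  have hC' := UHypergraph.edgeRelease_connected hC he hu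
  refine ⟨hU', hC', ?_⟩
  rw [UHypergraph.not_hasCycle_iff_card hC' fun _ => hU'.nonempty hk, hU'.sum_card,
    UHypergraph.card_edges_edgeRelease hA hU he hu]
  rwa [UHypergraph.not_hasCycle_iff_card hC fun _ => hU.nonempty hk, hU.sum_card] at hA

/-- the hypergraph obtained from a `k`-uniform supertree by an
edge-releasing operation on a non-pendent edge `e` at `u ∈ e` is again a
`k`-uniform supertree. -/
theorem edgeRelease_isSupertree (k : ℕ) (hk : 2 ≤ k)
    {V : Type} [Fintype V] [DecidableEq V] (G G' : UHypergraph V)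
    (hG : G.IsSupertree k)
    (e : Finset V) (he : e ∈ G.edges) (hnp : ¬ G.IsPendentEdge e)
    (u : V) (hu : u ∈ e)
    (hG' : G' = G.edgeRelease e u) :
    G'.IsSupertree k :=
  edgeRelease_isSupertree_general k G G' hG e he u hu hG'
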